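/- In the fractional linear setting, the key expectation identity holds: E[H_{i,n}(exp(-β e^{S_i - S_n}))] = E[ (ā_j / ((1 - exp(-β/ā_j))^{-1} + B̄_{1,j+1})) · (b̄_{j+1}/b̄_j) · (1/b̄_{n+1}) ], where j = n - i, the bar quantities are those of the reflected walk S̄_k = -S_k (i.e. ā_k = e^{S_k}, b̄_m = ∑_{k=0}^{m-1} e^{S_k}, B̄_{1,m} = ∑_{k=1}^{m-1} e^{S_k}), using duality of random walks. -/

import Mathlib

open MeasureTheory ProbabilityTheory Filter

/-- The fractional linear (geometric) probability generating function with mean `exp x`. -/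
noncomputable def geomPGF (x s : ℝ) : ℝ := (1 + Real.exp x * (1 - s))⁻¹

/-- The associated random walk: `walk X k = log m_1 + ... + log m_k` where `X j = log m_j`. -/
noncomputable def walk (X : ℕ → ℝ) (k : ℕ) : ℝ := ∑ j ∈ Finset.range k, X (j + 1)

/-- Forward composition `F_{i,n}(s) = F_{i+1}(F_{i+2}(... F_n(s) ...))`, with `F_{n,n}(s) = s`,
where `F_k` is the fractional linear pgf with mean `m_k = exp (X k)`. -/
noncomputable def Fcomp (X : ℕ → ℝ) (i n : ℕ) (s : ℝ) : ℝ :=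
  (List.range (n - i)).foldr (fun k t => geomPGF (X (i + k + 1)) t) s

/-- `H_{i,n}(s) := (1 - F_{i,n}(s)) ∏_{j ≠ i, 0 ≤ j ≤ n-1} F_{j,n}(0)`: given the environment,
this is `E[ (1 - s^{Z_{i,n}}) 1_{A_i(n)} | environment ]` for the BPIRE with geometric offspring
laws; in particular `E[H_{i,n}(0) | environment] = P(A_i(n) | environment)`, where `A_i(n)` is
the event that only the clan of the generation-`i` immigrant survives at time `n`. -/
noncomputable def Hfun (X : ℕ → ℝ) (i n : ℕ) (s : ℝ) : ℝ :=
  (1 - Fcomp X i n s) * ∏ j ∈ (Finset.range n).erase i, Fcomp X j n 0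

/-- The associated random walk of the random environment. -/
noncomputable def Sw {Ω : Type*} (X : ℕ → Ω → ℝ) (n : ℕ) (ω : Ω) : ℝ :=
  walk (fun k => X k ω) n

/-- `P(A_i(n)) = E[H_{i,n}(0)]`: the probability that at time `n` only the clan of the
generation-`i` immigrant survives in the BPIRE with geometric offspring distributions. -/
noncomputable def probOnlyClan {Ω : Type*} [MeasurableSpace Ω] (μ : Measure Ω)
    (X : ℕ → Ω → ℝ) (i n : ℕ) : ℝ :=
  ∫ ω, Hfun (fun k => X k ω) i n 0 ∂μ

/-- `Y` is lattice: its distribution is concentrated on an arithmetic progression. -/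
def IsLattice {Ω : Type*} [MeasurableSpace Ω] (μ : Measure Ω) (Y : Ω → ℝ) : Prop :=
  ∃ a h : ℝ, 0 < h ∧ ∀ᵐ ω ∂μ, ∃ k : ℤ, Y ω = a + k * h

/-!
With `a_k = e^{-S_k}`, a fractional linear step satisfies `(1 - f(s))⁻¹ = e^{-x} (1 - s)⁻¹ + 1`,
so `a_i (1 - F_{i,n}(s))⁻¹ = a_n (1 - s)⁻¹ + ∑_{i ≤ k < n} a_k`. In particular
`F_{j,n}(0) = c_{j+1} / c_j` with `c_j = ∑_{j ≤ k ≤ n} a_k`, the product in `H_{i,n}` telescopes,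
and `H_{i,n}(s)` becomes an explicit function of the walk. Reversing the increments
`X_1, …, X_n` turns `S_k` into `S_n - S_{n-k}` and this function into the integrand on the right.
Since the `X_k` are i.i.d., the reversed sequence has the same law, so the expectations agree.
-/

open Finset

lemma geomPGF_lt_one (x : ℝ) {s : ℝ} (hs : s < 1) : geomPGF x s < 1 :=
  inv_lt_one_of_one_lt₀ (by have := Real.exp_pos x; nlinarith)

lemma inv_one_sub_geomPGF (x : ℝ) {s : ℝ} (hs : s < 1) :
    (1 - geomPGF x s)⁻¹ = Real.exp (-x) * (1 - s)⁻¹ + 1 := by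
  have h1s : 1 - s ≠ 0 := by linarith
  have hpos : 0 < 1 + Real.exp x * (1 - s) := by have := Real.exp_pos x; nlinarith
  rw [geomPGF, Real.exp_neg]
  field_simp
  ring

lemma walk_succ (x : ℕ → ℝ) (k : ℕ) : walk x (k + 1) = walk x k + x (k + 1) :=
  sum_range_succ _ _

lemma Fcomp_self (x : ℕ → ℝ) (n : ℕ) (s : ℝ) : Fcomp x n n s = s := by
  simp [Fcomp]

lemma Fcomp_eq_geomPGF_Fcomp_succ (x : ℕ → ℝ) {i n : ℕ} (h : i < n) (s : ℝ) :
    Fcomp x i n s = geomPGF (x (i + 1)) (Fcomp x (i + 1) n s) := by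
  rw [Fcomp, show n - i = n - (i + 1) + 1 by omega, List.range_succ_eq_map, List.foldr_cons,
    List.foldr_map, Fcomp]
  simp only [Nat.succ_eq_add_one, zero_add, add_assoc, Nat.add_comm 1]

lemma Fcomp_lt_one (x : ℕ → ℝ) (i n : ℕ) {s : ℝ} (hs : s < 1) : Fcomp x i n s < 1 := by
  unfold Fcomp
  induction List.range (n - i) with
  | nil => exact hs
  | cons k l ih => exact geomPGF_lt_one _ ih

lemma exp_neg_walk_mul_inv_one_sub_Fcomp (x : ℕ → ℝ) {i n : ℕ} (hin : i ≤ n) {s : ℝ}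
    (hs : s < 1) :
    Real.exp (-walk x i) * (1 - Fcomp x i n s)⁻¹ =
      Real.exp (-walk x n) * (1 - s)⁻¹ + ∑ k ∈ Ico i n, Real.exp (-walk x k) := by
  induction hin using Nat.decreasingInduction with
  | self => simp [Fcomp_self]
  | of_succ i hi ih =>
    have hstep : Real.exp (-walk x i) * Real.exp (-x (i + 1)) = Real.exp (-walk x (i + 1)) := by
      rw [← Real.exp_add, walk_succ, neg_add]
    rw [Fcomp_eq_geomPGF_Fcomp_succ x hi, inv_one_sub_geomPGF _ (Fcomp_lt_one x _ n hs),
      mul_add, ← mul_assoc, hstep, ih, sum_eq_sum_Ico_succ_bot hi]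
    ring

lemma one_sub_Fcomp (x : ℕ → ℝ) {i n : ℕ} (hin : i ≤ n) {s : ℝ} (hs : s < 1) :
    1 - Fcomp x i n s = Real.exp (-walk x i) /
      (Real.exp (-walk x n) * (1 - s)⁻¹ + ∑ k ∈ Ico i n, Real.exp (-walk x k)) := by
  have hF : 1 - Fcomp x i n s ≠ 0 := by have := Fcomp_lt_one x i n hs; linarith
  rw [← exp_neg_walk_mul_inv_one_sub_Fcomp x hin hs]
  field_simp

noncomputable def expNegWalkSum (x : ℕ → ℝ) (j n : ℕ) : ℝ :=
  ∑ k ∈ Ico j (n + 1), Real.exp (-walk x k)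

lemma expNegWalkSum_pos (x : ℕ → ℝ) {j n : ℕ} (hjn : j ≤ n) : 0 < expNegWalkSum x j n :=
  sum_pos (fun _ _ => Real.exp_pos _) ⟨j, by simp; omega⟩

lemma expNegWalkSum_eq_add (x : ℕ → ℝ) {j n : ℕ} (hjn : j ≤ n) :
    expNegWalkSum x j n = Real.exp (-walk x j) + expNegWalkSum x (j + 1) n :=
  sum_eq_sum_Ico_succ_bot (by omega) _

lemma expNegWalkSum_self (x : ℕ → ℝ) (n : ℕ) : expNegWalkSum x n n = Real.exp (-walk x n) := by
  simp [expNegWalkSum]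

lemma Fcomp_zero (x : ℕ → ℝ) {m n : ℕ} (hmn : m ≤ n) :
    Fcomp x m n 0 = expNegWalkSum x (m + 1) n / expNegWalkSum x m n := by
  have h := one_sub_Fcomp x hmn zero_lt_one
  rw [sub_zero, inv_one, mul_one, add_comm, ← sum_Ico_succ_top hmn] at h
  have hE := expNegWalkSum_pos x hmn
  rw [eq_div_iff hE.ne', ← sub_eq_iff_eq_add'.mpr (expNegWalkSum_eq_add x hmn),
    show Fcomp x m n 0 = 1 - (1 - Fcomp x m n 0) by ring, h, ← expNegWalkSum]
  field_simp

lemma prod_range_div_of_ne_zero {K : Type*} [Field K] (f : ℕ → K) {n : ℕ}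
    (hf : ∀ j ≤ n, f j ≠ 0) : ∏ j ∈ range n, f (j + 1) / f j = f n / f 0 := by
  induction n with
  | zero => simp [div_self (hf 0 le_rfl)]
  | succ n ih =>
    rw [prod_range_succ, ih fun j hj => hf j (by omega)]
    field_simp [hf n (by omega)]

lemma Hfun_eq_one_sub_Fcomp_mul (x : ℕ → ℝ) {i n : ℕ} (hin : i < n) (s : ℝ) :
    Hfun x i n s = (1 - Fcomp x i n s) *
      (expNegWalkSum x n n / expNegWalkSum x 0 n *
        (expNegWalkSum x i n / expNegWalkSum x (i + 1) n)) := by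
  have hE : ∀ j ≤ n, expNegWalkSum x j n ≠ 0 := fun j hj => (expNegWalkSum_pos x hj).ne'
  have hprod : ∏ j ∈ range n, Fcomp x j n 0 = expNegWalkSum x n n / expNegWalkSum x 0 n := by
    rw [← prod_range_div_of_ne_zero (expNegWalkSum x · n) hE]
    exact prod_congr rfl fun j hj => Fcomp_zero x (by simp at hj; omega)
  have hsplit := mul_prod_erase (range n) (Fcomp x · n 0) (mem_range.mpr hin)
  rw [hprod, Fcomp_zero x hin.le] at hsplit
  rw [Hfun, ← hsplit]
  field_simp [hE i hin.le, hE (i + 1) hin]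

def reflectIcc (n k : ℕ) : ℕ := if 1 ≤ k ∧ k ≤ n then n + 1 - k else k

lemma reflectIcc_involutive (n : ℕ) : Function.Involutive (reflectIcc n) := by
  intro k
  unfold reflectIcc
  split_ifs <;> omega

lemma walk_reflectIcc (x : ℕ → ℝ) {n m : ℕ} (hm : m ≤ n) :
    walk (fun k => x (reflectIcc n k)) m = walk x n - walk x (n - m) := by
  induction m with
  | zero => simp [walk]
  | succ m ih =>
    have hr : reflectIcc n (m + 1) = n - (m + 1) + 1 := by unfold reflectIcc; split_ifs <;> omega
    rw [walk_succ, ih (by omega), hr, show n - m = n - (m + 1) + 1 by omega, walk_succ]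
    ring

lemma sum_exp_walk_reflectIcc (x : ℕ → ℝ) {n m : ℕ} (k : ℕ) (hm : m ≤ n + 1) :
    ∑ j ∈ Ico k m, Real.exp (walk (fun l => x (reflectIcc n l)) j) =
      Real.exp (walk x n) * ∑ j ∈ Ico (n + 1 - m) (n + 1 - k), Real.exp (-walk x j) := by
  rw [← sum_Ico_reflect _ k hm, mul_sum]
  refine sum_congr rfl fun j hj => ?_
  rw [walk_reflectIcc x (by simp at hj; omega), ← Real.exp_add, sub_eq_add_neg]

noncomputable def dualIntegrand (i n : ℕ) (β : ℝ) (x : ℕ → ℝ) : ℝ :=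
  (Real.exp (walk x (n - i)) /
      ((1 - Real.exp (-β / Real.exp (walk x (n - i))))⁻¹ +
        ∑ k ∈ Icc 1 (n - i), Real.exp (walk x k))) *
    ((∑ k ∈ range (n - i + 1), Real.exp (walk x k)) /
      (∑ k ∈ range (n - i), Real.exp (walk x k))) *
    (∑ k ∈ range (n + 1), Real.exp (walk x k))⁻¹

lemma Hfun_eq_dualIntegrand_reflectIcc (x : ℕ → ℝ) {i n : ℕ} (hin : i < n) {β : ℝ}
    (hβ : 0 < β) :
    Hfun x i n (Real.exp (-β * Real.exp (walk x i - walk x n))) =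
      dualIntegrand i n β (fun k => x (reflectIcc n k)) := by
  have hs : Real.exp (-β * Real.exp (walk x i - walk x n)) < 1 :=
    Real.exp_lt_one_iff.mpr (by nlinarith [Real.exp_pos (walk x i - walk x n)])
  have hwalk := walk_reflectIcc x (show n - i ≤ n by omega)
  rw [Nat.sub_sub_self hin.le] at hwalk
  have hβs : -β / Real.exp (walk x n - walk x i) = -β * Real.exp (walk x i - walk x n) := by
    rw [div_eq_mul_inv, ← Real.exp_neg, neg_sub]
  rw [dualIntegrand, hwalk, hβs, ← Ico_add_one_right_eq_Icc, range_eq_Ico, range_eq_Ico,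
    range_eq_Ico, sum_exp_walk_reflectIcc x 1 (show n - i + 1 ≤ n + 1 by omega),
    sum_exp_walk_reflectIcc x 0 (show n - i + 1 ≤ n + 1 by omega),
    sum_exp_walk_reflectIcc x 0 (show n - i ≤ n + 1 by omega),
    sum_exp_walk_reflectIcc x 0 (le_refl (n + 1)),
    Hfun_eq_one_sub_Fcomp_mul x hin, one_sub_Fcomp x hin.le hs]
  generalize Real.exp (-β * Real.exp (walk x i - walk x n)) = s
  rw [show n + 1 - (n - i + 1) = i by omega, show n + 1 - (n - i) = i + 1 by omega,
    Nat.add_sub_cancel, Nat.sub_zero, Nat.sub_self, ← expNegWalkSum, ← expNegWalkSum,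
    ← expNegWalkSum, expNegWalkSum_self, Real.exp_sub, Real.exp_neg, Real.exp_neg]
  have hE : ∀ j ≤ n, expNegWalkSum x j n ≠ 0 := fun j hj => (expNegWalkSum_pos x hj).ne'
  field_simp [hE i hin.le, hE (i + 1) hin, hE 0 (Nat.zero_le n)]

lemma measurable_walk (k : ℕ) : Measurable fun x : ℕ → ℝ => walk x k := by
  unfold walk
  fun_prop

lemma measurable_dualIntegrand (i n : ℕ) (β : ℝ) : Measurable (dualIntegrand i n β) := by
  unfold dualIntegrand
  have := measurable_walk
  fun_prop

namespace ProbabilityTheory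

variable {ι Ω β : Type*} [MeasurableSpace Ω] [MeasurableSpace β] {μ : Measure Ω}
  {X : ι → Ω → β}

lemma iIndepFun.map_comp_eq_map_of_injective (hmeas : ∀ i, Measurable (X i))
    (hindep : iIndepFun X μ) (hident : ∀ i j, IdentDistrib (X i) (X j) μ μ) {σ : ι → ι}
    (hσ : σ.Injective) :
    μ.map (fun ω i => X (σ i) ω) = μ.map (fun ω i => X i ω) := by
  rw [(hindep.precomp hσ).map_fun_eq_infinitePi_map fun i => hmeas (σ i),
    hindep.map_fun_eq_infinitePi_map hmeas]
  congr 1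
  funext i
  exact (hident (σ i) i).map_eq

lemma iIndepFun.integral_comp_eq_of_injective (hmeas : ∀ i, Measurable (X i))
    (hindep : iIndepFun X μ) (hident : ∀ i j, IdentDistrib (X i) (X j) μ μ) {σ : ι → ι}
    (hσ : σ.Injective) {f : (ι → β) → ℝ} (hf : Measurable f) :
    ∫ ω, f (fun i => X (σ i) ω) ∂μ = ∫ ω, f (fun i => X i ω) ∂μ := by
  have hX : Measurable fun ω i => X i ω := measurable_pi_lambda _ hmeas
  have hXσ : Measurable fun ω i => X (σ i) ω := measurable_pi_lambda _ fun i => hmeas (σ i)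
  rw [← integral_map hXσ.aemeasurable hf.aestronglyMeasurable,
    ← integral_map hX.aemeasurable hf.aestronglyMeasurable,
    hindep.map_comp_eq_map_of_injective hmeas hident hσ]

end ProbabilityTheory

theorem H_expectation_duality_general {Ω : Type*} [MeasurableSpace Ω]
    (μ : Measure Ω) (X : ℕ → Ω → ℝ) (hmeas : ∀ k, Measurable (X k))
    (hindep : iIndepFun X μ)
    (hident : ∀ k, IdentDistrib (X k) (X 0) μ μ)
    (i n : ℕ) (hin : i < n) (β : ℝ) (hβ : 0 < β) :
    ∫ ω, Hfun (fun k => X k ω) i n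
        (Real.exp (-β * Real.exp (Sw X i ω - Sw X n ω))) ∂μ =
      ∫ ω,
        (Real.exp (Sw X (n - i) ω) /
            ((1 - Real.exp (-β / Real.exp (Sw X (n - i) ω)))⁻¹ +
              ∑ k ∈ Finset.Icc 1 (n - i), Real.exp (Sw X k ω))) *
          ((∑ k ∈ Finset.range (n - i + 1), Real.exp (Sw X k ω)) /
            (∑ k ∈ Finset.range (n - i), Real.exp (Sw X k ω))) *
          (∑ k ∈ Finset.range (n + 1), Real.exp (Sw X k ω))⁻¹ ∂μ := by
  have hident₂ : ∀ k l, IdentDistrib (X k) (X l) μ μ := fun k l => (hident k).trans (hident l).symm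
  calc ∫ ω, Hfun (fun k => X k ω) i n (Real.exp (-β * Real.exp (Sw X i ω - Sw X n ω))) ∂μ
      = ∫ ω, dualIntegrand i n β (fun k => X (reflectIcc n k) ω) ∂μ :=
        integral_congr_ae (ae_of_all _ fun ω => Hfun_eq_dualIntegrand_reflectIcc _ hin hβ)
    _ = ∫ ω, dualIntegrand i n β (fun k => X k ω) ∂μ :=
        hindep.integral_comp_eq_of_injective hmeas hident₂ (reflectIcc_involutive n).injective
          (measurable_dualIntegrand i n β)

/-- display (NewInterpr)/(intro_Nu): by duality of the i.i.d. random walk,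
with `j = n - i`, `ā_k = e^{S_k}`, `b̄_m = ∑_{k=0}^{m-1} e^{S_k}`, `B̄_{1,m} = ∑_{k=1}^{m-1} e^{S_k}`,
`E[H_{i,n}(exp(-β e^{S_i - S_n}))]
  = E[ (ā_j / ((1 - exp(-β/ā_j))⁻¹ + B̄_{1,j+1})) · (b̄_{j+1}/b̄_j) · (1/b̄_{n+1}) ]`. -/
theorem H_expectation_duality {Ω : Type*} [MeasurableSpace Ω]
    (μ : Measure Ω) [IsProbabilityMeasure μ] (X : ℕ → Ω → ℝ) (hmeas : ∀ k, Measurable (X k))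
    (hindep : iIndepFun X μ)
    (hident : ∀ k, IdentDistrib (X k) (X 0) μ μ)
    (i n : ℕ) (hin : i < n) (β : ℝ) (hβ : 0 < β) :
    ∫ ω, Hfun (fun k => X k ω) i n
        (Real.exp (-β * Real.exp (Sw X i ω - Sw X n ω))) ∂μ =
      ∫ ω,
        (Real.exp (Sw X (n - i) ω) /
            ((1 - Real.exp (-β / Real.exp (Sw X (n - i) ω)))⁻¹ +
              ∑ k ∈ Finset.Icc 1 (n - i), Real.exp (Sw X k ω))) *
          ((∑ k ∈ Finset.range (n - i + 1), Real.exp (Sw X k ω)) /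
            (∑ k ∈ Finset.range (n - i), Real.exp (Sw X k ω))) *
          (∑ k ∈ Finset.range (n + 1), Real.exp (Sw X k ω))⁻¹ ∂μ :=
  H_expectation_duality_general μ X hmeas hindep hident i n hin β hβ
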